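/- If Γ = (G, σ) is odd-exchangeable, then the spectrum of Γ is symmetric with respect to the origin. -/

import Mathlib

open scoped Classical
open Polynomial

structure SignedGraph (V : Type*) where
  G : SimpleGraph V
  sgn : V → V → ℤ
  symm : ∀ u v, sgn u v = sgn v u
  pm : ∀ u v, G.Adj u v → sgn u v = 1 ∨ sgn u v = -1
  zero : ∀ u v, ¬ G.Adj u v → sgn u v = 0

namespace SignedGraph

variable {V : Type*}

/-- The (real) adjacency matrix of a signed graph. -/
noncomputable def adjMatrix [Fintype V] (Γ : SignedGraph V) : Matrix V V ℝ :=
  fun u v => (Γ.sgn u v : ℝ)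

/-- Switching with respect to a vertex subset `U`. -/
noncomputable def switch (Γ : SignedGraph V) (U : Set V) : SignedGraph V where
  G := Γ.G
  sgn u v := if ((u ∈ U) ↔ (v ∈ U)) then Γ.sgn u v else -Γ.sgn u v
  symm u v := by
    try dsimp only
    by_cases h : (u ∈ U) ↔ (v ∈ U)
    · rw [if_pos h, if_pos (Iff.symm h), Γ.symm u v]
    · rw [if_neg h, if_neg (fun hh => h (Iff.symm hh)), Γ.symm u v]
  pm u v hadj := by
    by_cases h : (u ∈ U) ↔ (v ∈ U)
    · simpa [h] using Γ.pm u v hadj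
    · rcases Γ.pm u v hadj with h1 | h1 <;> simp [h, h1]
  zero u v hadj := by
    by_cases h : (u ∈ U) ↔ (v ∈ U) <;> simp [h, Γ.zero u v hadj]

/-- The sign function on unordered pairs. -/
def sgnE (Γ : SignedGraph V) : Sym2 V → ℤ := Sym2.lift ⟨Γ.sgn, Γ.symm⟩

/-- The spectrum of `Γ` is symmetric with respect to the origin. -/
def SymmetricSpectrum [Fintype V] [DecidableEq V] (Γ : SignedGraph V) : Prop :=
  ∀ x : ℝ, Γ.adjMatrix.charpoly.rootMultiplicity x =
    Γ.adjMatrix.charpoly.rootMultiplicity (-x)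

/-- `B` is a (nonempty) 2-regular subgraph of `G`: a disjoint union of cycles. -/
def IsTwoRegular (Γ : SignedGraph V) (B : Γ.G.Subgraph) : Prop :=
  B.verts.Nonempty ∧ ∀ v ∈ B.verts, (B.neighborSet v).ncard = 2

/-- The product of the signs of all edges of a subgraph. -/
noncomputable def sgnProd (Γ : SignedGraph V) (B : Γ.G.Subgraph) : ℤ :=
  ∏ᶠ e ∈ B.edgeSet, Γ.sgnE e

/-- The number of connected components of a subgraph. -/
noncomputable def ncomp (Γ : SignedGraph V) (B : Γ.G.Subgraph) : ℕ :=
  Nat.card B.coe.ConnectedComponent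

/-- `Γ` is odd-exchangeable: some automorphism of `G` maps the set of positive odd
2-regular subgraphs onto the set of negative odd 2-regular subgraphs. -/
def OddExchangeable [Fintype V] (Γ : SignedGraph V) : Prop :=
  ∃ φ : Γ.G ≃g Γ.G,
    (fun B : Γ.G.Subgraph => B.map φ.toHom) ''
        {B | Γ.IsTwoRegular B ∧ Odd B.verts.ncard ∧ Γ.sgnProd B = 1} =
      {B | Γ.IsTwoRegular B ∧ Odd B.verts.ncard ∧ Γ.sgnProd B = -1}

end SignedGraph

/-!
Expand `det (x • 1 ± A)` over permutations `π`. Since `A` has zero diagonal, the term of `π`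
carries the factor `(±1) ^ #π.support`, so the two determinants agree as soon as the terms with an
odd number of moved points sum to zero. Such a term vanishes unless `π` moves every vertex to a
neighbour; then its product of entries is the sign of the subgraph formed by the cycles of `π` of
length at least 3 (a 2-cycle contributes a square), and this subgraph is 2-regular with an odd
number of vertices. Conjugation by the automorphism `φ` preserves the sign of `π` and its number of
fixed points, and carries that subgraph to its image under `φ`, so by odd-exchangeability it
matches the positive terms with the negative ones. Hence `χ(-x) = ±χ(x)` for the characteristic
polynomial `χ`, and its root multiplicities at `x` and `-x` agree.
-/

open Finset

namespace Equiv.Perm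

variable {α : Type*} [Fintype α] [DecidableEq α]

theorem prod_filter_apply_apply_eq_eq_one {M : Type*} [CommMonoid M] (π : Perm α) {f : α → M}
    (hf : ∀ v ∈ π.support, π (π v) = v → f v * f (π v) = 1) :
    ∏ v ∈ π.support with π (π v) = v, f v = 1 := by
  refine prod_involution (fun v _ => π v)
    (fun v hv => hf v (mem_filter.mp hv).1 (mem_filter.mp hv).2)
    (fun v hv _ => mem_support.mp (mem_filter.mp hv).1) (fun v hv => ?_)
    (fun v hv => (mem_filter.mp hv).2)
  obtain ⟨hv, hv2⟩ := mem_filter.mp hv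
  rw [mem_filter, mem_support, hv2]
  exact ⟨fun h => mem_support.mp hv h.symm, rfl⟩

theorem even_card_filter_apply_apply_eq (π : Perm α) : Even #{v ∈ π.support | π (π v) = v} := by
  have h := π.prod_filter_apply_apply_eq_eq_one (f := fun _ => (-1 : ℤ)) (by simp)
  rwa [prod_const, neg_one_pow_eq_one_iff_even (by norm_num)] at h

theorem odd_card_filter_apply_apply_ne {π : Perm α} (h : Odd #π.support) :
    Odd #{v ∈ π.support | π (π v) ≠ v} := by
  rw [← card_filter_add_card_filter_not (fun v => π (π v) = v)] at h
  exact (Nat.odd_add'.mp h).mpr (even_card_filter_apply_apply_eq π)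

theorem card_support_permCongr (e π : Perm α) : #(e.permCongr π).support = #π.support := by
  rw [permCongr_eq_mul, card_support_conj]

end Equiv.Perm

theorem Polynomial.rootMultiplicity_neg_of_comp_neg_X_eq {R : Type*} [CommRing R] [IsDomain R]
    {p : R[X]} {c : R} (hc : c ≠ 0) (h : p.comp (-X) = C c * p) (x : R) :
    p.rootMultiplicity (-x) = p.rootMultiplicity x := by
  rcases eq_or_ne p 0 with rfl | hp
  · simp
  have h_comp := rootMultiplicity_comp_C_mul_X_add_C p (-1) 0 x isUnit_one.neg
  simp only [map_neg, map_one, neg_mul, one_mul, map_zero, add_zero, h] at h_comp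
  rw [← h_comp, rootMultiplicity_mul (mul_ne_zero (C_ne_zero.mpr hc) hp), rootMultiplicity_C,
    zero_add]

namespace Matrix

open Equiv

variable {n R : Type*} [Fintype n] [DecidableEq n] [CommRing R]

theorem det_smul_one_add_of_diag_eq_zero {M : Matrix n n R} (hM : ∀ i, M i i = 0) (x : R) :
    det (x • 1 + M) =
      ∑ π : Perm n, (Perm.sign π : R) * x ^ #π.supportᶜ * ∏ i ∈ π.support, M (π i) i := by
  rw [det_apply']
  refine sum_congr rfl fun π _ => ?_
  rw [mul_assoc, ← prod_compl_mul_prod π.support, ← prod_const]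
  congr 2
  · refine prod_congr rfl fun i hi => ?_
    rw [Perm.notMem_support.mp (mem_compl.mp hi)]
    simp [hM]
  · refine prod_congr rfl fun i hi => ?_
    simp [one_apply_ne (Perm.mem_support.mp hi)]

theorem det_smul_one_sub_eq_det_smul_one_add {M : Matrix n n R} (hM : ∀ i, M i i = 0) (x : R)
    (h : ∑ π : Perm n with Odd #π.support,
      (Perm.sign π : R) * x ^ #π.supportᶜ * ∏ i ∈ π.support, M (π i) i = 0) :
    det (x • 1 - M) = det (x • 1 + M) := by
  have h_neg (π : Perm n) : ∏ i ∈ π.support, (-M) (π i) i =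
      (-1) ^ #π.support * ∏ i ∈ π.support, M (π i) i := by
    simp [prod_neg]
  rw [sub_eq_add_neg, det_smul_one_add_of_diag_eq_zero (by simpa using hM),
    det_smul_one_add_of_diag_eq_zero hM]
  simp only [h_neg, mul_left_comm _ ((-1 : R) ^ _)]
  rw [← sum_filter_add_sum_filter_not _ (fun π : Perm n => Odd #π.support),
    ← sum_filter_add_sum_filter_not univ (fun π : Perm n => Odd #π.support), h]
  congr 1
  · calc _ = ∑ π : Perm n with Odd #π.support,
          -((Perm.sign π : R) * x ^ #π.supportᶜ * ∏ i ∈ π.support, M (π i) i) :=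
          sum_congr rfl fun π hπ => by rw [(mem_filter.mp hπ).2.neg_one_pow, neg_one_mul]
      _ = 0 := by rw [sum_neg_distrib, h, neg_zero]
  · refine sum_congr rfl fun π hπ => ?_
    rw [(Nat.not_odd_iff_even.mp (mem_filter.mp hπ).2).neg_one_pow, one_mul]

theorem charpoly_comp_neg_X_of_det_sub_eq_det_add [IsDomain R] [Infinite R] {M : Matrix n n R}
    (h : ∀ x : R, det (x • 1 - M) = det (x • 1 + M)) :
    M.charpoly.comp (-X) = C ((-1) ^ Fintype.card n) * M.charpoly := by
  refine Polynomial.funext fun x => ?_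
  have hneg : (-x) • (1 : Matrix n n R) - M = -(x • 1 + M) := by rw [neg_smul]; abel
  simp only [eval_comp, eval_neg, eval_X, eval_mul, eval_C, eval_charpoly, scalar_apply,
    ← smul_one_eq_diagonal, hneg, det_neg, h]

end Matrix

namespace SimpleGraph

open Equiv

variable {V W : Type*} {G : SimpleGraph V} {G' : SimpleGraph W}

def IsAdjPerm (G : SimpleGraph V) (π : Perm V) : Prop :=
  ∀ v, π v ≠ v → G.Adj v (π v)

/-- The cycles of `π` of length at least 3, as a subgraph of `G` when `G.IsAdjPerm π`. -/
@[simps]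
def longCycleSubgraph (G : SimpleGraph V) (π : Perm V) : G.Subgraph where
  verts := {v | π v ≠ v ∧ π (π v) ≠ v}
  Adj u v := G.Adj u v ∧ (π u = v ∨ π v = u) ∧
    (π u ≠ u ∧ π (π u) ≠ u) ∧ (π v ≠ v ∧ π (π v) ≠ v)
  adj_sub h := h.1
  edge_vert h := h.2.2.1
  symm := ⟨fun _ _ h => ⟨h.1.symm, h.2.1.symm, h.2.2.2, h.2.2.1⟩⟩

theorem Subgraph.map_iso_injective (φ : G ≃g G') :
    Function.Injective (Subgraph.map φ.toHom) := by
  refine Function.LeftInverse.injective (g := Subgraph.map φ.symm.toHom) fun H => ?_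
  ext <;> simp [Relation.Map]

theorem Iso.permCongr_apply_apply (φ : G ≃g G') (π : Perm V) (v : V) :
    φ.toEquiv.permCongr π (φ v) = φ (π v) :=
  congrArg φ (congrArg π (φ.toEquiv.symm_apply_apply v))

theorem Iso.isAdjPerm_permCongr_iff (φ : G ≃g G') {π : Perm V} :
    G'.IsAdjPerm (φ.toEquiv.permCongr π) ↔ G.IsAdjPerm π := by
  simp only [IsAdjPerm, φ.surjective.forall, φ.permCongr_apply_apply]
  simp [φ.map_adj_iff]

theorem Iso.longCycleSubgraph_permCongr (φ : G ≃g G') (π : Perm V) :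
    G'.longCycleSubgraph (φ.toEquiv.permCongr π) = (G.longCycleSubgraph π).map φ.toHom := by
  ext u v
  · obtain ⟨u, rfl⟩ := φ.surjective u
    simp only [longCycleSubgraph_verts, Set.mem_ofPred_eq, φ.permCongr_apply_apply]
    simp
  · obtain ⟨u, rfl⟩ := φ.surjective u
    obtain ⟨v, rfl⟩ := φ.surjective v
    simp only [longCycleSubgraph_adj, φ.permCongr_apply_apply]
    simp [Relation.Map, φ.map_adj_iff]

variable {π : Perm V}

theorem apply_mem_verts_longCycleSubgraph_iff {v : V} :
    π v ∈ (G.longCycleSubgraph π).verts ↔ v ∈ (G.longCycleSubgraph π).verts := by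
  simp

theorem neighborSet_longCycleSubgraph (hπ : G.IsAdjPerm π) {v : V}
    (hv : v ∈ (G.longCycleSubgraph π).verts) :
    (G.longCycleSubgraph π).neighborSet v = {π v, π.symm v} := by
  ext w
  simp only [Subgraph.mem_neighborSet, longCycleSubgraph_adj, Set.mem_insert_iff,
    Set.mem_singleton_iff, eq_symm_apply]
  rw [eq_comm (a := w)]
  constructor
  · exact fun h => h.2.1
  · rintro (rfl | rfl)
    · exact ⟨hπ v hv.1, Or.inl rfl, hv, apply_mem_verts_longCycleSubgraph_iff.mpr hv⟩
    · have hw := apply_mem_verts_longCycleSubgraph_iff.mp hv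
      exact ⟨(hπ w hw.1).symm, Or.inr rfl, hv, hw⟩

theorem edgeSet_longCycleSubgraph (hπ : G.IsAdjPerm π) :
    (G.longCycleSubgraph π).edgeSet = (fun v => s(v, π v)) '' (G.longCycleSubgraph π).verts := by
  ext e
  induction e using Sym2.ind with
  | _ u v =>
    simp only [Subgraph.mem_edgeSet, longCycleSubgraph_adj, Set.mem_image, Sym2.eq_iff]
    constructor
    · rintro ⟨-, h | h, hu, hv⟩
      · exact ⟨u, hu, Or.inl ⟨rfl, h⟩⟩
      · exact ⟨v, hv, Or.inr ⟨rfl, h⟩⟩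
    · rintro ⟨x, hx, ⟨rfl, rfl⟩ | ⟨rfl, rfl⟩⟩
      · exact ⟨hπ x hx.1, Or.inl rfl, hx, apply_mem_verts_longCycleSubgraph_iff.mpr hx⟩
      · exact ⟨(hπ x hx.1).symm, Or.inr rfl, apply_mem_verts_longCycleSubgraph_iff.mpr hx, hx⟩

theorem injOn_verts_longCycleSubgraph :
    Set.InjOn (fun v => s(v, π v)) (G.longCycleSubgraph π).verts := by
  rintro u - v hv huv
  rcases Sym2.eq_iff.mp huv with ⟨h, -⟩ | ⟨h₁, h₂⟩
  · exact h
  · exact absurd (by rw [← h₁, h₂]) hv.2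

theorem verts_longCycleSubgraph_eq [Fintype V] [DecidableEq V] :
    (G.longCycleSubgraph π).verts = ↑{v ∈ π.support | π (π v) ≠ v} := by
  ext; simp

end SimpleGraph

namespace SignedGraph

open Equiv SimpleGraph

variable {V : Type*}

section

variable (Γ : SignedGraph V) {π : Perm V}

theorem sgn_mul_sgn_of_adj {u v : V} (h : Γ.G.Adj u v) : Γ.sgn u v * Γ.sgn v u = 1 := by
  rw [Γ.symm v u]
  rcases Γ.pm u v h with h | h <;> rw [h] <;> norm_num

theorem isTwoRegular_longCycleSubgraph (hπ : Γ.G.IsAdjPerm π)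
    (hne : (Γ.G.longCycleSubgraph π).verts.Nonempty) :
    Γ.IsTwoRegular (Γ.G.longCycleSubgraph π) := by
  refine ⟨hne, fun v hv => ?_⟩
  rw [neighborSet_longCycleSubgraph hπ hv]
  exact Set.ncard_pair fun h => hv.2 (by rw [h, apply_symm_apply])

variable [Fintype V]

theorem adjMatrix_apply_self (v : V) : Γ.adjMatrix v v = 0 := by
  simp [adjMatrix, Γ.zero v v (Γ.G.loopless.irrefl v)]

variable [DecidableEq V]

theorem isTwoRegular_longCycleSubgraph_and_odd (hπ : Γ.G.IsAdjPerm π)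
    (hodd : Odd #π.support) :
    Γ.IsTwoRegular (Γ.G.longCycleSubgraph π) ∧ Odd (Γ.G.longCycleSubgraph π).verts.ncard := by
  have hodd' := Perm.odd_card_filter_apply_apply_ne hodd
  rw [verts_longCycleSubgraph_eq, Set.ncard_coe_finset]
  refine ⟨Γ.isTwoRegular_longCycleSubgraph hπ ?_, hodd'⟩
  rw [verts_longCycleSubgraph_eq, coe_nonempty, ← card_pos]
  exact hodd'.pos

theorem sgnProd_longCycleSubgraph (hπ : Γ.G.IsAdjPerm π) :
    Γ.sgnProd (Γ.G.longCycleSubgraph π) = ∏ v ∈ π.support with π (π v) ≠ v, Γ.sgn v (π v) := by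
  rw [sgnProd, edgeSet_longCycleSubgraph hπ, finprod_mem_image injOn_verts_longCycleSubgraph,
    verts_longCycleSubgraph_eq, finprod_mem_coe_finset]
  rfl

theorem sgnProd_longCycleSubgraph_eq_one_or (hπ : Γ.G.IsAdjPerm π) :
    Γ.sgnProd (Γ.G.longCycleSubgraph π) = 1 ∨ Γ.sgnProd (Γ.G.longCycleSubgraph π) = -1 := by
  rw [← Int.isUnit_iff, sgnProd_longCycleSubgraph Γ hπ, IsUnit.prod_iff]
  intro v hv
  exact Int.isUnit_iff.mpr (Γ.pm v (π v) (hπ v (Perm.mem_support.mp (mem_filter.mp hv).1)))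

theorem prod_support_adjMatrix (hπ : Γ.G.IsAdjPerm π) :
    ∏ v ∈ π.support, Γ.adjMatrix (π v) v = Γ.sgnProd (Γ.G.longCycleSubgraph π) := by
  have h_two : ∏ v ∈ π.support with π (π v) = v, (Γ.sgn v (π v) : ℝ) = 1 :=
    π.prod_filter_apply_apply_eq_eq_one fun v hv hv2 => by
      rw [hv2]; exact_mod_cast Γ.sgn_mul_sgn_of_adj (hπ v (Perm.mem_support.mp hv))
  simp only [adjMatrix, Γ.symm (π _)]
  rw [← prod_filter_mul_prod_filter_not π.support (fun v => π (π v) = v), h_two, one_mul,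
    sgnProd_longCycleSubgraph Γ hπ]
  push_cast
  rfl

theorem prod_support_adjMatrix_eq_zero (hπ : ¬ Γ.G.IsAdjPerm π) :
    ∏ v ∈ π.support, Γ.adjMatrix (π v) v = 0 := by
  obtain ⟨v, hv, hnadj⟩ := not_forall₂.mp hπ
  refine prod_eq_zero (Perm.mem_support.mpr hv) ?_
  simp [adjMatrix, Γ.symm (π v), Γ.zero _ _ hnadj]

theorem sgnProd_longCycleSubgraph_permCongr_eq_neg_one_iff {φ : Γ.G ≃g Γ.G}
    (hφ : (fun B : Γ.G.Subgraph => B.map φ.toHom) ''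
        {B | Γ.IsTwoRegular B ∧ Odd B.verts.ncard ∧ Γ.sgnProd B = 1} =
      {B | Γ.IsTwoRegular B ∧ Odd B.verts.ncard ∧ Γ.sgnProd B = -1})
    (hπ : Γ.G.IsAdjPerm π) (hodd : Odd #π.support) :
    Γ.sgnProd (Γ.G.longCycleSubgraph (φ.toEquiv.permCongr π)) = -1 ↔
      Γ.sgnProd (Γ.G.longCycleSubgraph π) = 1 := by
  have h := (Subgraph.map_iso_injective φ).mem_set_image
    (s := {B | Γ.IsTwoRegular B ∧ Odd B.verts.ncard ∧ Γ.sgnProd B = 1})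
    (a := Γ.G.longCycleSubgraph π)
  rw [hφ, ← φ.longCycleSubgraph_permCongr] at h
  have hodd' : Odd #(φ.toEquiv.permCongr π).support := by rwa [Perm.card_support_permCongr]
  obtain ⟨hreg, hcard⟩ := Γ.isTwoRegular_longCycleSubgraph_and_odd hπ hodd
  obtain ⟨hreg', hcard'⟩ :=
    Γ.isTwoRegular_longCycleSubgraph_and_odd (φ.isAdjPerm_permCongr_iff.mpr hπ) hodd'
  exact ⟨fun hneg => (h.mp ⟨hreg', hcard', hneg⟩).2.2,
    fun hpos => (h.mpr ⟨hreg, hcard, hpos⟩).2.2⟩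

theorem sum_odd_support_eq_zero (h : Γ.OddExchangeable) (x : ℝ) :
    ∑ π : Perm V with Odd #π.support,
      (Perm.sign π : ℝ) * x ^ #π.supportᶜ * ∏ v ∈ π.support, Γ.adjMatrix (π v) v = 0 := by
  obtain ⟨φ, hφ⟩ := h
  set f : Perm V → ℝ := fun π => (Perm.sign π : ℝ) * x ^ #π.supportᶜ
  have hf (π : Perm V) : f (φ.toEquiv.permCongr π) = f π := by
    simp only [f, Perm.sign_permCongr, card_compl, Perm.card_support_permCongr]
  have hterm (π : Perm V) : ∏ v ∈ π.support, Γ.adjMatrix (π v) v =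
      (if Γ.G.IsAdjPerm π ∧ Γ.sgnProd (Γ.G.longCycleSubgraph π) = 1 then 1 else 0) -
      (if Γ.G.IsAdjPerm π ∧ Γ.sgnProd (Γ.G.longCycleSubgraph π) = -1 then 1 else 0) := by
    by_cases hπ : Γ.G.IsAdjPerm π
    · rw [Γ.prod_support_adjMatrix hπ]
      rcases Γ.sgnProd_longCycleSubgraph_eq_one_or hπ with h | h <;> simp [hπ, h]
    · simp [Γ.prod_support_adjMatrix_eq_zero hπ, hπ]
  calc _ = ∑ π : Perm V with Odd #π.support,
        ((if Γ.G.IsAdjPerm π ∧ Γ.sgnProd (Γ.G.longCycleSubgraph π) = 1 then f π else 0) -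
        (if Γ.G.IsAdjPerm π ∧ Γ.sgnProd (Γ.G.longCycleSubgraph π) = -1 then f π else 0)) := by
        refine sum_congr rfl fun π _ => ?_
        rw [mul_assoc, hterm]
        split_ifs <;> simp [f]
    _ = ∑ π : Perm V with Odd #π.support ∧ Γ.G.IsAdjPerm π ∧
          Γ.sgnProd (Γ.G.longCycleSubgraph π) = 1, f π -
        ∑ π : Perm V with Odd #π.support ∧ Γ.G.IsAdjPerm π ∧
          Γ.sgnProd (Γ.G.longCycleSubgraph π) = -1, f π := by
        rw [sum_sub_distrib, ← sum_filter, ← sum_filter, filter_filter, filter_filter]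
    _ = 0 := by
        rw [sub_eq_zero]
        refine sum_equiv φ.toEquiv.permCongr (fun π => ?_) (fun π _ => (hf π).symm)
        simp only [mem_filter, mem_univ, true_and, Perm.card_support_permCongr,
          φ.isAdjPerm_permCongr_iff]
        exact and_congr_right fun hodd => and_congr_right fun hπ =>
          (Γ.sgnProd_longCycleSubgraph_permCongr_eq_neg_one_iff hφ hπ hodd).symm

end

theorem oddExchangeable_symmetricSpectrum [Fintype V] [DecidableEq V]
    (Γ : SignedGraph V) (h : Γ.OddExchangeable) : Γ.SymmetricSpectrum := by
  have hdet (x : ℝ) : (x • 1 - Γ.adjMatrix).det = (x • 1 + Γ.adjMatrix).det :=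
    Matrix.det_smul_one_sub_eq_det_smul_one_add Γ.adjMatrix_apply_self x
      (Γ.sum_odd_support_eq_zero h x)
  intro x
  exact (rootMultiplicity_neg_of_comp_neg_X_eq (pow_ne_zero _ (neg_ne_zero.mpr one_ne_zero))
    (Matrix.charpoly_comp_neg_X_of_det_sub_eq_det_add hdet) x).symm

end SignedGraph
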